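/- For any bipartite graph G: (1/4)·las_bal,1(G) ≤ (1/2)·√(g_bal,1(G)) ≤ h_bal,1(G) = (1/4)·θ_bal(G). Moreover, (1/2)·√(g_bal,1(G)) = (1/4)·θ_bal(G) if and only if las_bal,1(G) = θ_bal(G). -/

import Mathlib

open Finset Matrix

variable {V : Type*} [Fintype V] [DecidableEq V]

/-- The trace inner product `⟨A,B⟩ = ∑_{i,j} A_{ij} B_{ij}` of two matrices. -/
noncomputable def ip (A B : Matrix V V ℝ) : ℝ := ∑ i, ∑ j, A i j * B i j

/-- The matrix `C` associated to the bipartition `(P, Pᶜ)`: entry `1/2` whenever the two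
indices lie on opposite sides of the bipartition, and `0` otherwise. -/
noncomputable def Cmat (P : Finset V) : Matrix V V ℝ :=
  Matrix.of fun i j => if (i ∈ P ↔ j ∈ P) then 0 else 1/2

/-- The `(1+|V|)×(1+|V|)` block matrix `[[1, xᵀ],[x, X]]`. -/
noncomputable def dblk (x : V → ℝ) (X : Matrix V V ℝ) : Matrix (Unit ⊕ V) (Unit ⊕ V) ℝ :=
  Matrix.fromBlocks 1 (Matrix.of fun _ j => x j) (Matrix.of fun i _ => x i) X

/-- The semidefinite programming bound `h₁(G)` for a bipartite graph `G` with
bipartition `(P, Pᶜ)`. -/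
noncomputable def h1 (G : SimpleGraph V) (P : Finset V) : ℝ :=
  sSup {x : ℝ | ∃ X : Matrix V V ℝ, X.PosSemidef ∧ X.trace = 1 ∧
    (∀ i j, G.Adj i j → X i j = 0) ∧ x = ip (Cmat P) X}

/-- The semidefinite programming bound `g₁(G)` for a bipartite graph `G` with
bipartition `(P, Pᶜ)`. -/
noncomputable def g1 (G : SimpleGraph V) (P : Finset V) : ℝ :=
  sSup {x : ℝ | ∃ X : Matrix V V ℝ, (dblk (fun i => X i i) X).PosSemidef ∧
    (∀ i j, G.Adj i j → X i j = 0) ∧ x = ip (Cmat P) X}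

/-- The adjacency matrix of a graph is Hermitian (over `ℝ`). -/
lemma adjHerm (G : SimpleGraph V) [DecidableRel G.Adj] : (G.adjMatrix ℝ).IsHermitian := by
  rw [Matrix.IsHermitian, Matrix.conjTranspose_eq_transpose_of_trivial]
  exact G.isSymm_adjMatrix

/-- The list of eigenvalues of a Hermitian matrix, with multiplicities,
sorted in nondecreasing order. -/
noncomputable def eigList (A : Matrix V V ℝ) (hA : A.IsHermitian) : List ℝ :=
  (Finset.univ.val.map hA.eigenvalues).sort (· ≤ ·)

/-- The second largest eigenvalue (with multiplicities) of a Hermitian matrix. -/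
noncomputable def secondLargest (A : Matrix V V ℝ) (hA : A.IsHermitian) : ℝ :=
  (eigList A hA).getD (Fintype.card V - 2) 0

/-- The smallest eigenvalue of a Hermitian matrix. -/
noncomputable def smallestEig (A : Matrix V V ℝ) (hA : A.IsHermitian) : ℝ :=
  (eigList A hA).getD 0 0

/-- A graph is edge-transitive if its automorphism group acts transitively on edges. -/
def EdgeTransitive (G : SimpleGraph V) : Prop :=
  ∀ e f : G.edgeSet, ∃ φ : G ≃g G, φ.mapEdgeSet e = f

/-- A graph is vertex-transitive if its automorphism group acts transitively on vertices. -/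
def VertexTransitive (G : SimpleGraph V) : Prop :=
  ∀ u v : V, ∃ φ : G ≃g G, φ u = v

/-- The sign vector of the bipartition: `+1` on `P` and `−1` on `Pᶜ`. -/
noncomputable def fvec (P : Finset V) : V → ℝ := fun v => if v ∈ P then 1 else -1

/-- The rank-one matrix `ffᵀ`. -/
noncomputable def fMat (P : Finset V) : Matrix V V ℝ :=
  Matrix.of fun i j => fvec P i * fvec P j

/-- The all-ones matrix `J`. -/
noncomputable def Jmat : Matrix V V ℝ := Matrix.of fun _ _ => (1 : ℝ)

/-- `las_bal,1(G)`. -/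
noncomputable def lasBal1 (G : SimpleGraph V) (P : Finset V) : ℝ :=
  sSup {x : ℝ | ∃ X : Matrix V V ℝ, (dblk (fun i => X i i) X).PosSemidef ∧
    (∀ i j, G.Adj i j → X i j = 0) ∧ ip (fMat P) X = 0 ∧ x = X.trace}

/-- `g_bal,1(G)`. -/
noncomputable def gBal1 (G : SimpleGraph V) (P : Finset V) : ℝ :=
  sSup {x : ℝ | ∃ X : Matrix V V ℝ, (dblk (fun i => X i i) X).PosSemidef ∧
    (∀ i j, G.Adj i j → X i j = 0) ∧ ip (fMat P) X = 0 ∧ x = ip (Cmat P) X}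

/-- `θ_bal(G)`. -/
noncomputable def thetaBal (G : SimpleGraph V) (P : Finset V) : ℝ :=
  sSup {x : ℝ | ∃ X : Matrix V V ℝ, X.PosSemidef ∧ X.trace = 1 ∧
    (∀ i j, G.Adj i j → X i j = 0) ∧ ip (fMat P) X = 0 ∧
    ip (Matrix.diagonal (fvec P)) X = 0 ∧ x = ip Jmat X}

/-- `h_bal,1(G)`. -/
noncomputable def hBal1 (G : SimpleGraph V) (P : Finset V) : ℝ :=
  sSup {x : ℝ | ∃ X : Matrix V V ℝ, X.PosSemidef ∧ X.trace = 1 ∧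
    (∀ i j, G.Adj i j → X i j = 0) ∧ ip (fMat P) X = 0 ∧
    ip (Matrix.diagonal (fvec P)) X = 0 ∧ x = ip (Cmat P) X}

/-!
Writing `d = diag X`, the Schur complement turns `[[1, dᵀ], [d, X]] ⪰ 0` into `X ⪰ d dᵀ`, so
`(d ⬝ w)² ≤ wᵀ X w` for every `w`. With `w = 1` this gives `(tr X)² ≤ ⟨J, X⟩`, and with `w = f`
the constraint `⟨ffᵀ, X⟩ = 0` forces `⟨Diag f, X⟩ = f ⬝ d = 0`. Since `C = (J - ffᵀ)/4`, the
objectives `⟨C, X⟩` and `⟨J, X⟩ / 4` agree on all feasible matrices, whence `h = θ/4`; and a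
feasible matrix of `g` divided by its trace is feasible for `θ`, so `⟨J, X⟩ ≤ tr X · θ`.
Hence `las² ≤ 4g ≤ θ · min(θ, las)`, which gives the chain and, when `4g = θ²`, also `θ ≤ las`.
-/

section Matrix

variable {ι : Type*} [Fintype ι]

lemma ip_vecMulVec (u v : ι → ℝ) (X : Matrix ι ι ℝ) : ip (vecMulVec u v) X = u ⬝ᵥ X *ᵥ v := by
  simp only [ip, vecMulVec_apply, dotProduct, mulVec, Finset.mul_sum]
  exact Finset.sum_congr rfl fun i _ => Finset.sum_congr rfl fun j _ => by ring

lemma ip_Jmat (X : Matrix ι ι ℝ) : ip Jmat X = 1 ⬝ᵥ X *ᵥ 1 := by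
  rw [← ip_vecMulVec]
  congr 1
  ext i j
  simp [Jmat, vecMulVec_apply]

lemma ip_fMat [DecidableEq ι] (P : Finset ι) (X : Matrix ι ι ℝ) :
    ip (fMat P) X = fvec P ⬝ᵥ X *ᵥ fvec P :=
  ip_vecMulVec (fvec P) (fvec P) X

lemma ip_Cmat [DecidableEq ι] (P : Finset ι) (X : Matrix ι ι ℝ) :
    ip (Cmat P) X = (ip Jmat X - ip (fMat P) X) / 4 := by
  have hC : ∀ i j, Cmat P i j = (1 - fvec P i * fvec P j) / 4 := by
    intro i j
    by_cases hi : i ∈ P <;> by_cases hj : j ∈ P <;> simp [Cmat, fvec, hi, hj] <;> norm_num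
  simp only [ip, hC, Jmat, fMat, of_apply, ← Finset.sum_sub_distrib, Finset.sum_div]
  exact Finset.sum_congr rfl fun i _ => Finset.sum_congr rfl fun j _ => by ring

lemma ip_smul_right (A : Matrix ι ι ℝ) (c : ℝ) (X : Matrix ι ι ℝ) :
    ip A (c • X) = c * ip A X := by
  simp only [ip, Matrix.smul_apply, smul_eq_mul, Finset.mul_sum]
  exact Finset.sum_congr rfl fun i _ => Finset.sum_congr rfl fun j _ => by ring

lemma ip_diagonal [DecidableEq ι] (d : ι → ℝ) (X : Matrix ι ι ℝ) :
    ip (diagonal d) X = ∑ i, d i * X i i := by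
  simp [ip, diagonal_apply, ite_mul]

lemma Matrix.PosSemidef.two_mul_apply_le [DecidableEq ι] {X : Matrix ι ι ℝ} (hX : X.PosSemidef)
    (i j : ι) : 2 * X i j ≤ X i i + X j j := by
  have hq := hX.dotProduct_mulVec_nonneg (Pi.single i 1 - Pi.single j 1)
  simp only [star_trivial, mulVec_sub, mulVec_single, MulOpposite.op_one, one_smul, dotProduct_sub,
    sub_dotProduct, single_dotProduct, col_apply, one_mul, sub_nonneg, tsub_le_iff_right] at hq
  have hsymm : X j i = X i j := by simpa using hX.1.apply i j
  linarith

lemma Matrix.PosSemidef.ip_Jmat_nonneg {X : Matrix ι ι ℝ} (hX : X.PosSemidef) :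
    0 ≤ ip Jmat X := by
  simpa [ip_Jmat] using hX.dotProduct_mulVec_nonneg (1 : ι → ℝ)

lemma Matrix.PosSemidef.ip_Jmat_le [DecidableEq ι] {X : Matrix ι ι ℝ} (hX : X.PosSemidef) :
    ip Jmat X ≤ Fintype.card ι * X.trace :=
  calc ip Jmat X = ∑ i, ∑ j, X i j := by simp [ip, Jmat]
    _ ≤ ∑ i, ∑ j, (X i i + X j j) / 2 := by
      gcongr with i _ j _
      linarith [hX.two_mul_apply_le i j]
    _ = Fintype.card ι * X.trace := by
      simp only [← Finset.sum_div, Finset.sum_add_distrib, Finset.sum_const, Finset.card_univ,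
        nsmul_eq_mul, trace, diag_apply, ← Finset.mul_sum]
      ring

lemma dblk_posSemidef_iff (x : ι → ℝ) (X : Matrix ι ι ℝ) :
    (dblk x X).PosSemidef ↔ (X - vecMulVec x x).PosSemidef := by
  let row : Matrix Unit ι ℝ := of fun _ j => x j
  have hblk : dblk x X = fromBlocks 1 row rowᴴ X := by
    ext (_ | i) (_ | j) <;> simp [dblk, row]
  have hschur : vecMulVec x x = rowᴴ * row := by
    ext i j; simp [vecMulVec_apply, mul_apply, row]
  let _ : Invertible (1 : Matrix Unit Unit ℝ) := invertibleOne
  have h := PosDef.fromBlocks₁₁ row X (PosDef.one (n := Unit) (R := ℝ))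
  rwa [inv_one, Matrix.mul_one, ← hschur, ← hblk] at h

variable {x : ι → ℝ} {X : Matrix ι ι ℝ}

lemma posSemidef_of_dblk (h : (dblk x X).PosSemidef) : X.PosSemidef := by
  simpa using ((dblk_posSemidef_iff x X).1 h).add (posSemidef_vecMulVec_self_star x)

lemma sq_dotProduct_le_of_dblk (h : (dblk x X).PosSemidef) (w : ι → ℝ) :
    (x ⬝ᵥ w) ^ 2 ≤ w ⬝ᵥ X *ᵥ w := by
  have hq := ((dblk_posSemidef_iff x X).1 h).dotProduct_mulVec_nonneg w
  rw [star_trivial, sub_mulVec, dotProduct_sub, vecMulVec_mulVec, dotProduct_smul, op_smul_eq_mul,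
    sub_nonneg, dotProduct_comm w x] at hq
  linarith

lemma dotProduct_eq_zero_of_dblk (h : (dblk x X).PosSemidef) {w : ι → ℝ}
    (hw : w ⬝ᵥ X *ᵥ w = 0) : x ⬝ᵥ w = 0 := by
  have hsq := sq_dotProduct_le_of_dblk h w
  rw [hw] at hsq
  exact pow_eq_zero_iff two_ne_zero |>.1 (le_antisymm hsq (sq_nonneg _))

lemma trace_le_card_of_dblk [DecidableEq ι] (h : (dblk (fun i => X i i) X).PosSemidef) :
    X.trace ≤ Fintype.card ι := by
  have hdiag : ∀ i, X i i ≤ 1 := by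
    intro i
    have hsq := sq_dotProduct_le_of_dblk h (Pi.single i 1)
    simp only [dotProduct_single, mul_one, single_dotProduct, mulVec_single_one, col_apply,
      one_mul] at hsq
    nlinarith
  calc X.trace = ∑ i, X i i := rfl
    _ ≤ ∑ _i : ι, (1 : ℝ) := Finset.sum_le_sum fun i _ => hdiag i
    _ = Fintype.card ι := by simp

lemma sq_trace_le_ip_Jmat_of_dblk (h : (dblk (fun i => X i i) X).PosSemidef) :
    X.trace ^ 2 ≤ ip Jmat X := by
  simpa [ip_Jmat, trace, dotProduct_one] using sq_dotProduct_le_of_dblk h 1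

end Matrix

/-- The feasible region shared by `lasBal1` and `gBal1`. -/
def BalFeasible (G : SimpleGraph V) (P : Finset V) (X : Matrix V V ℝ) : Prop :=
  (dblk (fun i => X i i) X).PosSemidef ∧ (∀ i j, G.Adj i j → X i j = 0) ∧ ip (fMat P) X = 0

/-- The feasible region shared by `thetaBal` and `hBal1`. -/
def ThetaBalFeasible (G : SimpleGraph V) (P : Finset V) (X : Matrix V V ℝ) : Prop :=
  X.PosSemidef ∧ X.trace = 1 ∧ (∀ i j, G.Adj i j → X i j = 0) ∧ ip (fMat P) X = 0 ∧
    ip (diagonal (fvec P)) X = 0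

variable {G : SimpleGraph V} {P : Finset V} {X : Matrix V V ℝ}

namespace BalFeasible

variable (G P) in
lemma zero : BalFeasible G P 0 := by
  refine ⟨(dblk_posSemidef_iff _ _).2 ?_, fun _ _ _ => rfl, by simp [ip]⟩
  convert PosSemidef.zero
  ext
  simp [vecMulVec_apply]

lemma posSemidef (hX : BalFeasible G P X) : X.PosSemidef :=
  posSemidef_of_dblk hX.1

lemma ip_Cmat_eq (hX : BalFeasible G P X) : ip (Cmat P) X = ip Jmat X / 4 := by
  rw [ip_Cmat, hX.2.2, sub_zero]

lemma ip_diagonal_fvec (hX : BalFeasible G P X) : ip (diagonal (fvec P)) X = 0 := by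
  rw [ip_diagonal]
  show fvec P ⬝ᵥ (fun i => X i i) = 0
  rw [dotProduct_comm]
  exact dotProduct_eq_zero_of_dblk hX.1 (by rw [← ip_fMat, hX.2.2])

lemma thetaBalFeasible_inv_trace_smul (hX : BalFeasible G P X) (ht : 0 < X.trace) :
    ThetaBalFeasible G P (X.trace⁻¹ • X) :=
  ⟨hX.posSemidef.smul (inv_nonneg.2 ht.le),
    by rw [trace_smul, smul_eq_mul, inv_mul_cancel₀ ht.ne'],
    fun i j hij => by simp [hX.2.1 i j hij], by rw [ip_smul_right, hX.2.2, mul_zero],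
    by rw [ip_smul_right, hX.ip_diagonal_fvec, mul_zero]⟩

end BalFeasible

lemma trace_le_lasBal1 (hX : BalFeasible G P X) : X.trace ≤ lasBal1 G P :=
  le_csSup ⟨Fintype.card V, by rintro _ ⟨Y, hY, -, -, rfl⟩; exact trace_le_card_of_dblk hY⟩
    ⟨X, hX.1, hX.2.1, hX.2.2, rfl⟩

variable (G P) in
lemma lasBal1_nonneg : 0 ≤ lasBal1 G P := by
  simpa using trace_le_lasBal1 (BalFeasible.zero G P)

lemma lasBal1_le {c : ℝ} (h : ∀ X, BalFeasible G P X → X.trace ≤ c) : lasBal1 G P ≤ c := by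
  obtain ⟨h1, h2, h3⟩ := BalFeasible.zero G P
  refine csSup_le ⟨_, 0, h1, h2, h3, rfl⟩ ?_
  rintro _ ⟨Y, h1, h2, h3, rfl⟩
  exact h Y ⟨h1, h2, h3⟩

lemma ip_Cmat_le_gBal1 (hX : BalFeasible G P X) : ip (Cmat P) X ≤ gBal1 G P := by
  refine le_csSup ⟨Fintype.card V * Fintype.card V / 4, ?_⟩ ⟨X, hX.1, hX.2.1, hX.2.2, rfl⟩
  rintro _ ⟨Y, h1, h2, h3, rfl⟩
  have hY : BalFeasible G P Y := ⟨h1, h2, h3⟩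
  have hJ := hY.posSemidef.ip_Jmat_le
  have ht := trace_le_card_of_dblk h1
  rw [hY.ip_Cmat_eq]
  nlinarith [Nat.cast_nonneg (α := ℝ) (Fintype.card V)]

variable (G P) in
lemma gBal1_nonneg : 0 ≤ gBal1 G P := by
  simpa [ip] using ip_Cmat_le_gBal1 (BalFeasible.zero G P)

lemma gBal1_le {c : ℝ} (h : ∀ X, BalFeasible G P X → ip (Cmat P) X ≤ c) : gBal1 G P ≤ c := by
  obtain ⟨h1, h2, h3⟩ := BalFeasible.zero G P
  refine csSup_le ⟨_, 0, h1, h2, h3, rfl⟩ ?_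
  rintro _ ⟨Y, h1, h2, h3, rfl⟩
  exact h Y ⟨h1, h2, h3⟩

lemma ip_Jmat_le_thetaBal (hX : ThetaBalFeasible G P X) : ip Jmat X ≤ thetaBal G P := by
  refine le_csSup ⟨Fintype.card V, ?_⟩ ⟨X, hX.1, hX.2.1, hX.2.2.1, hX.2.2.2.1, hX.2.2.2.2, rfl⟩
  rintro _ ⟨Y, hY, htr, -, -, -, rfl⟩
  simpa [htr] using hY.ip_Jmat_le

variable (G P) in
lemma thetaBal_nonneg : 0 ≤ thetaBal G P :=
  Real.sSup_nonneg <| by rintro _ ⟨Y, hY, -, -, -, -, rfl⟩; exact hY.ip_Jmat_nonneg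

variable (G P) in
lemma hBal1_eq_thetaBal_div_four : hBal1 G P = thetaBal G P / 4 := by
  rw [div_eq_inv_mul, ← smul_eq_mul, hBal1, thetaBal, ← Real.sSup_smul_of_nonneg (by norm_num)]
  congr 1
  ext c
  simp only [Set.mem_ofPred_eq, Set.mem_smul_set, smul_eq_mul]
  constructor
  · rintro ⟨X, h1, h2, h3, h4, h5, rfl⟩
    exact ⟨_, ⟨X, h1, h2, h3, h4, h5, rfl⟩, by rw [ip_Cmat, h4, sub_zero, inv_mul_eq_div]⟩
  · rintro ⟨_, ⟨X, h1, h2, h3, h4, h5, rfl⟩, rfl⟩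
    exact ⟨X, h1, h2, h3, h4, h5, by rw [ip_Cmat, h4, sub_zero, inv_mul_eq_div]⟩

lemma BalFeasible.ip_Jmat_le_trace_mul_thetaBal (hX : BalFeasible G P X) :
    ip Jmat X ≤ X.trace * thetaBal G P := by
  rcases hX.posSemidef.trace_nonneg.eq_or_lt with ht | ht
  · simp [(hX.posSemidef.trace_eq_zero_iff).1 ht.symm, ip]
  · have h := ip_Jmat_le_thetaBal (hX.thetaBalFeasible_inv_trace_smul ht)
    rwa [ip_smul_right, inv_mul_le_iff₀ ht] at h

variable (G P) in
lemma lasBal1_le_two_mul_sqrt_gBal1 : lasBal1 G P ≤ 2 * √(gBal1 G P) :=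
  lasBal1_le fun X hX => by
    have ht := hX.posSemidef.trace_nonneg
    have hsq := sq_trace_le_ip_Jmat_of_dblk hX.1
    have hg := ip_Cmat_le_gBal1 hX
    rw [hX.ip_Cmat_eq] at hg
    have hhalf : X.trace / 2 ≤ √(gBal1 G P) :=
      (Real.le_sqrt (by linarith) (gBal1_nonneg G P)).2 (by nlinarith)
    linarith

variable (G P) in
lemma gBal1_le_sq_thetaBal_div_four : gBal1 G P ≤ thetaBal G P ^ 2 / 4 :=
  gBal1_le fun X hX => by
    have ht := hX.posSemidef.trace_nonneg
    have hsq := sq_trace_le_ip_Jmat_of_dblk hX.1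
    have hJ := hX.ip_Jmat_le_trace_mul_thetaBal
    have htθ : X.trace ≤ thetaBal G P := by nlinarith [thetaBal_nonneg G P]
    rw [hX.ip_Cmat_eq]
    nlinarith [thetaBal_nonneg G P]

variable (G P) in
lemma four_mul_gBal1_le_lasBal1_mul_thetaBal : 4 * gBal1 G P ≤ lasBal1 G P * thetaBal G P := by
  suffices gBal1 G P ≤ lasBal1 G P * thetaBal G P / 4 by linarith
  refine gBal1_le fun X hX => ?_
  have hJ := hX.ip_Jmat_le_trace_mul_thetaBal
  have := mul_le_mul_of_nonneg_right (trace_le_lasBal1 hX) (thetaBal_nonneg G P)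
  rw [hX.ip_Cmat_eq]
  linarith

theorem stmt16_general (G : SimpleGraph V) (P : Finset V) :
    (1/4 : ℝ) * lasBal1 G P ≤ (1/2 : ℝ) * Real.sqrt (gBal1 G P) ∧
    (1/2 : ℝ) * Real.sqrt (gBal1 G P) ≤ hBal1 G P ∧
    hBal1 G P = (1/4 : ℝ) * thetaBal G P ∧
    ((1/2 : ℝ) * Real.sqrt (gBal1 G P) = (1/4 : ℝ) * thetaBal G P ↔
      lasBal1 G P = thetaBal G P) := by
  have hlas := lasBal1_le_two_mul_sqrt_gBal1 G P
  have hθ := thetaBal_nonneg G P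
  have hsqrt : √(gBal1 G P) ≤ thetaBal G P / 2 :=
    (Real.sqrt_le_left (by linarith)).2 (by linarith [gBal1_le_sq_thetaBal_div_four G P])
  rw [hBal1_eq_thetaBal_div_four]
  refine ⟨by linarith, by linarith, by ring, fun h => ?_, fun h => by linarith⟩
  have h4g : 4 * gBal1 G P = thetaBal G P ^ 2 := by
    rw [← Real.sq_sqrt (gBal1_nonneg G P), show √(gBal1 G P) = thetaBal G P / 2 by linarith]
    ring
  -- `θ² = 4g ≤ las · θ` and `las ≤ 2√g = θ`
  nlinarith [four_mul_gBal1_le_lasBal1_mul_thetaBal G P, lasBal1_nonneg G P]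

/-- for any bipartite graph `G`,
`(1/4)·las_bal,1(G) ≤ (1/2)·√(g_bal,1(G)) ≤ h_bal,1(G) = (1/4)·θ_bal(G)`, and
`(1/2)·√(g_bal,1(G)) = (1/4)·θ_bal(G)` iff `las_bal,1(G) = θ_bal(G)`. -/
theorem stmt16 (G : SimpleGraph V) (P : Finset V)
    (hbip : ∀ ⦃u v⦄, G.Adj u v → (u ∈ P ↔ v ∉ P)) :
    (1/4 : ℝ) * lasBal1 G P ≤ (1/2 : ℝ) * Real.sqrt (gBal1 G P) ∧
    (1/2 : ℝ) * Real.sqrt (gBal1 G P) ≤ hBal1 G P ∧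
    hBal1 G P = (1/4 : ℝ) * thetaBal G P ∧
    ((1/2 : ℝ) * Real.sqrt (gBal1 G P) = (1/4 : ℝ) * thetaBal G P ↔
      lasBal1 G P = thetaBal G P) :=
  stmt16_general G P
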